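/- Let A be a C-hyperideal of a commutative multiplicative hyperring G and S an MCS with A ∩ S = ∅. Then the following are equivalent: (i) A is a quasi S-primary hyperideal of G and there exists r ∈ S such that for every a ∈ G, r∘a² ⊆ A implies r∘a ⊆ A; (ii) A is an S-prime hyperideal of G; (iii) A is an S-primary hyperideal of G and there exists r ∈ S such that for every a ∈ G, r∘a² ⊆ A implies r∘a ⊆ A. -/

import Mathlib

/-! If `r` satisfies `r ∘ a² ⊆ A → r ∘ a ⊆ A`, then `r ∘ y ⊆ A` for every `y ∈ rad A`: from
`yⁿ ⊆ A` we get `y^(2^k) ⊆ A` for large `k`, and the condition halves the exponent `k` times.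
So if `t ∘ u ⊆ rad A` and `s ∈ r ∘ t ∩ S`, then `s ∘ u ⊆ r ∘ (t ∘ u) ⊆ A`; this upgrades
quasi `S`-primary (a fortiori `S`-primary) to `S`-prime.

Conversely, let `A` be an `S`-prime C-hyperideal with witness `t`, and `s ∈ t ∘ t ∩ S`. If
`s ∘ a² ⊆ A`, then `t ∘ t ∘ a ∘ a` meets `A`, hence lies in `A` by the C-property. So `x ∘ x ⊆ A`
for every `x ∈ t ∘ a`, `S`-primeness gives `t ∘ x ⊆ A`, and `s ∘ a ⊆ t ∘ (t ∘ a) ⊆ A`. -/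

open Set

/-- A commutative multiplicative hyperring: a commutative additive group with a
commutative, associative hyperoperation `hmul` satisfying `(-a)∘b = -(a∘b)`,
weak distributivity, and having an identity element `e` with `a ∈ e∘a`. -/
class MulHyperring (G : Type*) extends AddCommGroup G where
  hmul : G → G → Set G
  hmul_nonempty : ∀ a b : G, (hmul a b).Nonempty
  hmul_comm : ∀ a b : G, hmul a b = hmul b a
  hmul_assoc : ∀ a b c : G, (⋃ x ∈ hmul a b, hmul x c) = ⋃ x ∈ hmul b c, hmul a x
  neg_hmul : ∀ a b : G, hmul (-a) b = (fun x => -x) '' (hmul a b)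
  hmul_add : ∀ a b c : G,
    hmul a (b + c) ⊆ {x | ∃ u ∈ hmul a b, ∃ v ∈ hmul a c, x = u + v}
  e : G
  e_mem : ∀ a : G, a ∈ hmul e a

namespace MulHyperring

variable {G : Type*} [MulHyperring G]

/-- Hyperproduct of an element with a set: `a ∘ B = ⋃ b ∈ B, a ∘ b`. -/
def smulSet (a : G) (B : Set G) : Set G := ⋃ b ∈ B, hmul a b

/-- Hyperproduct of two sets. -/
def setMul (A B : Set G) : Set G := ⋃ a ∈ A, ⋃ b ∈ B, hmul a b

/-- Hyperproduct `a₁ ∘ a₂ ∘ ⋯ ∘ aₙ` of a (nonempty) list of elements. -/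
def hProd : List G → Set G
  | [] => ∅
  | [a] => {a}
  | a :: b :: l => smulSet a (hProd (b :: l))

/-- `aⁿ` as a hyperproduct. -/
def hPow (a : G) (n : ℕ) : Set G := hProd (List.replicate n a)

/-- `A` is a hyperideal of `G`. -/
def IsHyperideal (A : Set G) : Prop :=
  A.Nonempty ∧ (∀ x ∈ A, ∀ y ∈ A, x - y ∈ A) ∧ ∀ r : G, ∀ x ∈ A, hmul r x ⊆ A

/-- `A` is a `C`-hyperideal: any finite hyperproduct meeting `A` is contained in `A`. -/
def IsCHyperideal (A : Set G) : Prop :=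
  IsHyperideal A ∧ ∀ l : List G, l ≠ [] → (hProd l ∩ A).Nonempty → hProd l ⊆ A

/-- The radical of a (C-)hyperideal: `{a | aⁿ ⊆ A for some n ≥ 1}`. -/
def rad (A : Set G) : Set G := {a | ∃ n : ℕ, 1 ≤ n ∧ hPow a n ⊆ A}

/-- The hyperideal generated by a set. -/
def idealGen (X : Set G) : Set G := ⋂₀ {A | IsHyperideal A ∧ X ⊆ A}

/-- The hyperideal product of two hyperideals. -/
def idealMul (A B : Set G) : Set G := idealGen (setMul A B)

/-- Multiplicative closed subset. -/
def IsMCS (S : Set G) : Prop :=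
  e ∈ S ∧ ∀ s₁ ∈ S, ∀ s₂ ∈ S, (hmul s₁ s₂ ∩ S).Nonempty

/-- Prime hyperideal. -/
def IsPrime (P : Set G) : Prop :=
  IsHyperideal P ∧ P ≠ univ ∧ ∀ x y : G, hmul x y ⊆ P → x ∈ P ∨ y ∈ P

/-- `S`-prime hyperideal. -/
def IsSPrime (S A : Set G) : Prop :=
  IsHyperideal A ∧ A ∩ S = ∅ ∧
    ∃ t ∈ S, ∀ u v : G, hmul u v ⊆ A → hmul t u ⊆ A ∨ hmul t v ⊆ A

/-- `S`-primary hyperideal. -/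
def IsSPrimary (S A : Set G) : Prop :=
  IsHyperideal A ∧ A ∩ S = ∅ ∧
    ∃ t ∈ S, ∀ u v : G, hmul u v ⊆ A → hmul t u ⊆ A ∨ hmul t v ⊆ rad A

/-- Quasi `S`-primary hyperideal. -/
def IsQuasiSPrimary (S A : Set G) : Prop :=
  IsHyperideal A ∧ A ∩ S = ∅ ∧
    ∃ t ∈ S, ∀ u v : G, hmul u v ⊆ A → hmul t u ⊆ rad A ∨ hmul t v ⊆ rad A

/-- Weakly quasi `S`-primary hyperideal. -/
def IsWeaklyQuasiSPrimary (S A : Set G) : Prop :=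
  IsHyperideal A ∧ A ∩ S = ∅ ∧
    ∃ t ∈ S, ∀ u v : G, 0 ∉ hmul u v → hmul u v ⊆ A →
      hmul t u ⊆ rad A ∨ hmul t v ⊆ rad A

/-- Strongly quasi `S`-primary hyperideal. -/
def IsStronglyQuasiSPrimary (S A : Set G) : Prop :=
  IsHyperideal A ∧ A ∩ S = ∅ ∧
    ∃ t ∈ S, ∀ u v : G, hmul u v ⊆ A →
      smulSet t (hPow u 2) ⊆ A ∨ hmul t v ⊆ rad A

/-- The residual `(B : x) = {y | y ∘ x ⊆ B}`. -/
def colon (B : Set G) (x : G) : Set G := {y | hmul y x ⊆ B}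

end MulHyperring

namespace MulHyperring

variable {G : Type*} [MulHyperring G]

section HyperproductAlgebra

lemma mem_smulSet {a z : G} {B : Set G} : z ∈ smulSet a B ↔ ∃ b ∈ B, z ∈ hmul a b := by
  simp [smulSet]

lemma smulSet_singleton (a b : G) : smulSet a {b} = hmul a b := by
  simp [smulSet]

lemma smulSet_mono (a : G) {B C : Set G} (h : B ⊆ C) : smulSet a B ⊆ smulSet a C :=
  biUnion_mono h fun _ _ => le_rfl

lemma hmul_subset_smulSet (a : G) {b : G} {B : Set G} (hb : b ∈ B) : hmul a b ⊆ smulSet a B :=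
  subset_biUnion_of_mem hb

lemma subset_setMul {x : G} {X : Set G} (hx : x ∈ X) (C : Set G) : smulSet x C ⊆ setMul X C :=
  subset_biUnion_of_mem (u := fun y => smulSet y C) hx

lemma setMul_singleton_left (a : G) (C : Set G) : setMul {a} C = smulSet a C := by
  simp [setMul, smulSet]

lemma setMul_smulSet (a : G) (B C : Set G) : setMul (smulSet a B) C = smulSet a (setMul B C) := by
  have assoc : ∀ z b c, (∃ x ∈ hmul a b, z ∈ hmul x c) ↔ ∃ y ∈ hmul b c, z ∈ hmul a y := by
    intro z b c
    simpa using Set.ext_iff.mp (hmul_assoc a b c) z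
  ext z
  simp only [setMul, smulSet, mem_iUnion, exists_prop]
  constructor
  · rintro ⟨x, ⟨b, hb, hx⟩, c, hc, hz⟩
    obtain ⟨y, hy, hz⟩ := (assoc z b c).mp ⟨x, hx, hz⟩
    exact ⟨y, ⟨b, hb, c, hc, hy⟩, hz⟩
  · rintro ⟨y, ⟨b, hb, c, hc, hy⟩, hz⟩
    obtain ⟨x, hx, hz⟩ := (assoc z b c).mpr ⟨y, hy, hz⟩
    exact ⟨x, ⟨b, hb, hx⟩, c, hc, hz⟩

lemma setMul_hmul (a b : G) (C : Set G) : setMul (hmul a b) C = smulSet a (smulSet b C) := by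
  rw [← smulSet_singleton, setMul_smulSet, setMul_singleton_left]

lemma smulSet_subset_smulSet_smulSet {a b x : G} (hx : x ∈ hmul a b) (C : Set G) :
    smulSet x C ⊆ smulSet a (smulSet b C) :=
  setMul_hmul a b C ▸ subset_setMul hx C

lemma hmul_subset_smulSet_hmul {a b x : G} (hx : x ∈ hmul a b) (c : G) :
    hmul x c ⊆ smulSet a (hmul b c) := by
  simpa only [smulSet_singleton] using smulSet_subset_smulSet_smulSet hx {c}

lemma smulSet_hmul_comm (a b c : G) : smulSet a (hmul b c) = smulSet b (hmul a c) := by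
  rw [← smulSet_singleton b c, ← smulSet_singleton a c, ← setMul_hmul, ← setMul_hmul, hmul_comm]

lemma IsHyperideal.smulSet_subset {A : Set G} (hA : IsHyperideal A) (r : G) {B : Set G}
    (hB : B ⊆ A) : smulSet r B ⊆ A := by
  intro z hz
  obtain ⟨b, hb, hz⟩ := mem_smulSet.mp hz
  exact hA.2.2 r b (hB hb) hz

end HyperproductAlgebra

section Powers

lemma hProd_cons (a : G) {l : List G} (hl : l ≠ []) : hProd (a :: l) = smulSet a (hProd l) := by
  cases l with
  | nil => exact absurd rfl hl
  | cons b m => rfl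

lemma hProd_append {l₁ l₂ : List G} (h₁ : l₁ ≠ []) (h₂ : l₂ ≠ []) :
    hProd (l₁ ++ l₂) = setMul (hProd l₁) (hProd l₂) := by
  induction l₁ with
  | nil => exact absurd rfl h₁
  | cons a l ih =>
    rcases eq_or_ne l [] with rfl | hl
    · rw [List.singleton_append, hProd_cons a h₂]
      exact (setMul_singleton_left a _).symm
    · rw [List.cons_append, hProd_cons a (by simp [hl]), ih hl, hProd_cons a hl, setMul_smulSet]

lemma hPow_one (a : G) : hPow a 1 = {a} := rfl

lemma hPow_two (a : G) : hPow a 2 = hmul a a :=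
  smulSet_singleton a a

lemma hPow_succ (a : G) {n : ℕ} (hn : 1 ≤ n) : hPow a (n + 1) = smulSet a (hPow a n) :=
  hProd_cons a (by simpa [Nat.one_le_iff_ne_zero] using hn)

lemma hPow_add (a : G) {m n : ℕ} (hm : 1 ≤ m) (hn : 1 ≤ n) :
    hPow a (m + n) = setMul (hPow a m) (hPow a n) := by
  rw [hPow, List.replicate_add]
  exact hProd_append (by simpa [Nat.one_le_iff_ne_zero] using hm)
    (by simpa [Nat.one_le_iff_ne_zero] using hn)

lemma IsHyperideal.hPow_subset_of_le {A : Set G} (hA : IsHyperideal A) {a : G} {n m : ℕ}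
    (hn : 1 ≤ n) (hnm : n ≤ m) (h : hPow a n ⊆ A) : hPow a m ⊆ A := by
  induction m, hnm using Nat.le_induction with
  | base => exact h
  | succ k hk ih => rw [hPow_succ a (hn.trans hk)]; exact hA.smulSet_subset a ih

lemma subset_rad (A : Set G) : A ⊆ rad A :=
  fun a ha => ⟨1, le_rfl, by rw [hPow_one]; exact singleton_subset_iff.mpr ha⟩

end Powers

section SquareCancellation

variable {A : Set G} {r : G}

lemma smulSet_hPow_subset_of_two_mul (hr : ∀ a : G, smulSet r (hPow a 2) ⊆ A → hmul r a ⊆ A)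
    {y : G} {m : ℕ} (hm : 1 ≤ m) (h : smulSet r (hPow y (2 * m)) ⊆ A) :
    smulSet r (hPow y m) ⊆ A := by
  intro z hz
  obtain ⟨x, hx, hz⟩ := mem_smulSet.mp hz
  refine hr x ?_ hz
  rw [hPow_two]
  refine (smulSet_mono r ?_).trans h
  rw [two_mul, hPow_add y hm hm]
  exact (hmul_subset_smulSet x hx).trans (subset_setMul hx _)

lemma hmul_subset_of_mem_rad (hA : IsHyperideal A)
    (hr : ∀ a : G, smulSet r (hPow a 2) ⊆ A → hmul r a ⊆ A) {y : G} (hy : y ∈ rad A) :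
    hmul r y ⊆ A := by
  obtain ⟨n, hn, hyn⟩ := hy
  have halve : ∀ k : ℕ, smulSet r (hPow y (2 ^ k)) ⊆ A → hmul r y ⊆ A := by
    intro k
    induction k with
    | zero => simp [hPow_one, smulSet_singleton]
    | succ k ih =>
      intro h
      exact ih (smulSet_hPow_subset_of_two_mul hr Nat.one_le_two_pow (pow_succ' 2 k ▸ h))
  exact halve n (hA.smulSet_subset r (hA.hPow_subset_of_le hn Nat.lt_two_pow_self.le hyn))

lemma hmul_subset_of_hmul_subset_rad (hA : IsHyperideal A)
    (hr : ∀ a : G, smulSet r (hPow a 2) ⊆ A → hmul r a ⊆ A) {s t w : G} (hs : s ∈ hmul r t)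
    (hw : hmul t w ⊆ rad A) : hmul s w ⊆ A := by
  refine (hmul_subset_smulSet_hmul hs w).trans fun z hz => ?_
  obtain ⟨x, hx, hz⟩ := mem_smulSet.mp hz
  exact hmul_subset_of_mem_rad hA hr (hw hx) hz

end SquareCancellation

variable {A S : Set G}

lemma IsSPrime.isSPrimary (h : IsSPrime S A) : IsSPrimary S A := by
  obtain ⟨hI, hAS, t, htS, ht⟩ := h
  exact ⟨hI, hAS, t, htS, fun u v huv => (ht u v huv).imp id (·.trans (subset_rad A))⟩

lemma IsSPrimary.isQuasiSPrimary (h : IsSPrimary S A) : IsQuasiSPrimary S A := by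
  obtain ⟨hI, hAS, t, htS, ht⟩ := h
  exact ⟨hI, hAS, t, htS, fun u v huv => (ht u v huv).imp (·.trans (subset_rad A)) id⟩

lemma IsQuasiSPrimary.isSPrime (h : IsQuasiSPrimary S A) (hS : IsMCS S) {r : G} (hrS : r ∈ S)
    (hr : ∀ a : G, smulSet r (hPow a 2) ⊆ A → hmul r a ⊆ A) : IsSPrime S A := by
  obtain ⟨hI, hAS, t, htS, ht⟩ := h
  obtain ⟨s, hs, hsS⟩ := hS.2 r hrS t htS
  exact ⟨hI, hAS, s, hsS, fun u v huv => (ht u v huv).imp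
    (hmul_subset_of_hmul_subset_rad hI hr hs) (hmul_subset_of_hmul_subset_rad hI hr hs)⟩

lemma IsSPrime.exists_hmul_subset_of_sq_subset (h : IsSPrime S A) (hA : IsCHyperideal A)
    (hS : IsMCS S) : ∃ r ∈ S, ∀ a : G, smulSet r (hPow a 2) ⊆ A → hmul r a ⊆ A := by
  obtain ⟨-, -, t, htS, ht⟩ := h
  obtain ⟨s, hs, hsS⟩ := hS.2 t htS t htS
  refine ⟨s, hsS, fun a ha => ?_⟩
  rw [hPow_two] at ha
  have hprod : hProd [t, t, a, a] = smulSet t (smulSet t (hmul a a)) := by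
    simp only [hProd, smulSet_singleton]
  have htta : smulSet t (smulSet t (hmul a a)) ⊆ A := by
    obtain ⟨w, hw⟩ := hmul_nonempty a a
    obtain ⟨p, hp⟩ := hmul_nonempty s w
    have hsub := smulSet_subset_smulSet_smulSet hs (hmul a a)
    have hpA : p ∈ smulSet s (hmul a a) := mem_smulSet.mpr ⟨w, hw, hp⟩
    exact hprod ▸ hA.2 _ (by simp) ⟨p, hprod ▸ hsub hpA, ha hpA⟩
  have hsq : ∀ x ∈ hmul t a, hmul x x ⊆ A := fun x hx =>
    ((hmul_subset_smulSet_hmul hx x).trans (smulSet_mono t (hmul_subset_smulSet a hx))).trans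
      (by rwa [smulSet_hmul_comm a t a])
  have hta : smulSet t (hmul t a) ⊆ A := fun z hz => by
    obtain ⟨x, hx, hz⟩ := mem_smulSet.mp hz
    exact (ht x x (hsq x hx)).elim id id hz
  exact (hmul_subset_smulSet_hmul hs a).trans hta

end MulHyperring

open MulHyperring in
theorem quasiSPrimary_sq_iff_sPrime_iff_sPrimary_sq_general {G : Type*} [MulHyperring G] (A S : Set G) (hA : IsCHyperideal A)
    (hS : IsMCS S) :
    ((IsQuasiSPrimary S A ∧ ∃ r ∈ S, ∀ a : G, smulSet r (hPow a 2) ⊆ A → hmul r a ⊆ A) ↔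
      IsSPrime S A) ∧
    (IsSPrime S A ↔
      (IsSPrimary S A ∧ ∃ r ∈ S, ∀ a : G, smulSet r (hPow a 2) ⊆ A → hmul r a ⊆ A)) := by
  have hsq := fun hp : IsSPrime S A => hp.exists_hmul_subset_of_sq_subset hA hS
  exact ⟨⟨fun ⟨hq, _, hrS, hr⟩ => hq.isSPrime hS hrS hr,
      fun hp => ⟨hp.isSPrimary.isQuasiSPrimary, hsq hp⟩⟩,
    ⟨fun hp => ⟨hp.isSPrimary, hsq hp⟩,
      fun ⟨hq, _, hrS, hr⟩ => hq.isQuasiSPrimary.isSPrime hS hrS hr⟩⟩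

open MulHyperring in
theorem quasiSPrimary_sq_iff_sPrime_iff_sPrimary_sq {G : Type*} [MulHyperring G] (A S : Set G) (hA : IsCHyperideal A)
    (hS : IsMCS S) (hAS : A ∩ S = ∅) :
    ((IsQuasiSPrimary S A ∧ ∃ r ∈ S, ∀ a : G, smulSet r (hPow a 2) ⊆ A → hmul r a ⊆ A) ↔
      IsSPrime S A) ∧
    (IsSPrime S A ↔
      (IsSPrimary S A ∧ ∃ r ∈ S, ∀ a : G, smulSet r (hPow a 2) ⊆ A → hmul r a ⊆ A)) :=
  quasiSPrimary_sq_iff_sPrime_iff_sPrimary_sq_general A S hA hS
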